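/- arXiv:1109.6212 — 3 statements merged into one kernel-verified Lean document; each statement's English description precedes it below -/
import Mathlib

section
/- Let p > 2, w̄(s) = (cosh s)^{−2/(p−2)}, I₂ = ∫_ℝ w̄², I_p = ∫_ℝ w̄^p, J₂ = ∫_ℝ (w̄')². Then I_p = 4 I₂/(p+2) and J₂ = 4 I₂/((p+2)(p−2)). -/
/-!
With `w̄ = cosh ^ (-α)`, `α = 2/(p-2)`, all three integrals are integrals of powers `cosh ^ (-β)`:
`I₂` has `β = 2α`, `I_p` has `β = 2α + 2` because `α p = 2α + 2`, and `(w̄')² = α² sinh² cosh^(-2α-2)`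
gives `J₂ = α² (I₂ - I_p)` via `sinh² = cosh² - 1`. Integrating the derivative of
`sinh · cosh ^ (-(β+1))` over `ℝ` yields `(β + 1) ∫ cosh ^ (-(β+2)) = β ∫ cosh ^ (-β)`,
which relates `I_p` to `I₂`.
-/

open Real MeasureTheory Filter Set Asymptotics

lemma exp_div_two_le_cosh (s : ℝ) : exp s / 2 ≤ cosh s := by
  rw [cosh_eq]
  linarith [exp_pos (-s)]

lemma cosh_rpow_neg_le {β : ℝ} (hβ : 0 ≤ β) (s : ℝ) : cosh s ^ (-β) ≤ 2 ^ β * exp (-β * s) := by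
  calc cosh s ^ (-β) ≤ (exp s / 2) ^ (-β) :=
        rpow_le_rpow_of_nonpos (by positivity) (exp_div_two_le_cosh s) (by linarith)
    _ = 2 ^ β * exp (-β * s) := by
        rw [div_rpow (exp_pos s).le zero_le_two, rpow_neg (exp_pos s).le, ← exp_mul,
          rpow_neg zero_le_two, neg_mul, exp_neg]
        field_simp

lemma integrable_cosh_rpow_neg {β : ℝ} (hβ : 0 < β) :
    Integrable (fun s : ℝ => cosh s ^ (-β)) := by
  have hcont : Continuous (fun s : ℝ => cosh s ^ (-β)) :=
    continuous_cosh.rpow_const fun s => Or.inl (cosh_pos s).ne'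
  refine hcont.locallyIntegrable.integrable_of_isBigO_atTop_of_norm_isNegInvariant
    (g := fun s => exp (-β * s)) (ae_of_all _ fun s => by simp [cosh_neg]) ?_
    ⟨Ioi 0, Ioi_mem_atTop 0, exp_neg_integrableOn_Ioi 0 hβ⟩
  refine IsBigO.of_bound (2 ^ β) (Eventually.of_forall fun s => ?_)
  rw [norm_of_nonneg (by positivity), norm_of_nonneg (exp_pos _).le]
  exact cosh_rpow_neg_le hβ.le s

lemma hasDerivAt_cosh_rpow (a s : ℝ) :
    HasDerivAt (fun t => cosh t ^ a) (a * sinh s * cosh s ^ (a - 1)) s :=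
  ((hasDerivAt_cosh s).rpow_const (Or.inl (cosh_pos s).ne')).congr_deriv (by ring)

lemma hasDerivAt_sinh_mul_cosh_rpow (β s : ℝ) :
    HasDerivAt (fun t => sinh t * cosh t ^ (-(β + 1)))
      ((β + 1) * cosh s ^ (-(β + 2)) - β * cosh s ^ (-β)) s := by
  refine ((hasDerivAt_sinh s).mul (hasDerivAt_cosh_rpow (-(β + 1)) s)).congr_deriv ?_
  have hc := (cosh_pos s).ne'
  rw [show -β = -(β + 2) + 1 + 1 by ring, rpow_add_one hc, rpow_add_one hc,
    show -(β + 1) = -(β + 2) + 1 by ring, rpow_add_one hc, add_sub_cancel_right]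
  linear_combination (β + 1) * cosh s ^ (-(β + 2)) * cosh_sq s

lemma norm_sinh_mul_cosh_rpow_le (β s : ℝ) :
    ‖sinh s * cosh s ^ (-(β + 1))‖ ≤ cosh s ^ (-β) := by
  have hc := cosh_pos s
  rw [norm_mul, norm_of_nonneg (rpow_pos_of_pos hc _).le, show -β = -(β + 1) + 1 by ring,
    rpow_add_one hc.ne', mul_comm]
  gcongr
  rw [Real.norm_eq_abs, abs_sinh, ← cosh_abs]
  exact (sinh_lt_cosh _).le

lemma integral_cosh_rpow_neg_recursion {β : ℝ} (hβ : 0 < β) :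
    (β + 1) * ∫ s : ℝ, cosh s ^ (-(β + 2)) = β * ∫ s : ℝ, cosh s ^ (-β) := by
  have hβ0 := integrable_cosh_rpow_neg hβ
  have hβ2 := integrable_cosh_rpow_neg (by linarith : 0 < β + 2)
  have hg : Integrable fun s => sinh s * cosh s ^ (-(β + 1)) :=
    hβ0.mono' (by fun_prop) (ae_of_all _ (norm_sinh_mul_cosh_rpow_le β))
  have := integral_eq_zero_of_hasDerivAt_of_integrable (hasDerivAt_sinh_mul_cosh_rpow β)
    ((hβ2.const_mul _).sub (hβ0.const_mul _)) hg
  rwa [integral_sub (hβ2.const_mul _) (hβ0.const_mul _), integral_const_mul,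
    integral_const_mul, sub_eq_zero] at this

lemma deriv_cosh_rpow_sq (a s : ℝ) :
    deriv (fun t => cosh t ^ a) s ^ 2 = a ^ 2 * (cosh s ^ (2 * a) - cosh s ^ (2 * a - 2)) := by
  have hc := cosh_pos s
  rw [(hasDerivAt_cosh_rpow a s).deriv, mul_pow, mul_pow, ← rpow_mul_natCast hc.le,
    show 2 * a = (a - 1) * (2 : ℕ) + 1 + 1 by push_cast; ring, rpow_add_one hc.ne',
    rpow_add_one hc.ne', add_assoc, one_add_one_eq_two, add_sub_cancel_right, sinh_sq]
  ring

/-- For `p > 2` and `w̄(s) = (cosh s)^{−2/(p−2)}`, with `I₂ = ∫ w̄²`, `I_p = ∫ w̄^p`,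
`J₂ = ∫ (w̄')²`, one has `I_p = 4 I₂/(p+2)` and `J₂ = 4 I₂/((p+2)(p−2))`. -/
theorem stmt6 (p : ℝ) (hp : 2 < p)
    (w : ℝ → ℝ) (hw : ∀ s : ℝ, w s = Real.cosh s ^ (-(2 / (p - 2))))
    (I2 Ip J2 : ℝ)
    (hI2 : I2 = ∫ s : ℝ, w s ^ (2 : ℝ))
    (hIp : Ip = ∫ s : ℝ, w s ^ p)
    (hJ2 : J2 = ∫ s : ℝ, deriv w s ^ (2 : ℕ)) :
    Ip = 4 * I2 / (p + 2) ∧ J2 = 4 * I2 / ((p + 2) * (p - 2)) := by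
  set α := 2 / (p - 2) with hα_def
  have hp2 : p - 2 ≠ 0 := by linarith
  have hα : 0 < α := div_pos two_pos (by linarith)
  have hαp : α * p = 2 * α + 2 := by rw [hα_def]; field_simp; ring
  have hw_pow (b s : ℝ) : w s ^ b = cosh s ^ (-(α * b)) := by
    rw [hw, ← rpow_mul (cosh_pos s).le, neg_mul]
  have hI2' : I2 = ∫ s, cosh s ^ (-(2 * α)) := by simp_rw [hI2, hw_pow, mul_comm α]
  have hIp' : Ip = ∫ s, cosh s ^ (-(2 * α + 2)) := by simp_rw [hIp, hw_pow, hαp]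
  have hJ2' : J2 = α ^ 2 * (I2 - Ip) := by
    have hi := integrable_cosh_rpow_neg (mul_pos two_pos hα)
    have hi2 := integrable_cosh_rpow_neg (by positivity : 0 < 2 * α + 2)
    rw [hJ2, funext hw, hI2', hIp', ← integral_sub hi hi2, ← integral_const_mul]
    simp_rw [deriv_cosh_rpow_sq, neg_sq, mul_neg, neg_add']
  have hrec := integral_cosh_rpow_neg_recursion (mul_pos two_pos hα)
  rw [← hI2', ← hIp'] at hrec
  have hIp_eq : Ip = 4 * I2 / (p + 2) := by
    rw [eq_div_iff (by linarith)]
    linear_combination (p - 2) * hrec - 2 * (Ip - I2) * hαp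
  refine ⟨hIp_eq, ?_⟩
  rw [hJ2', hIp_eq, hα_def]
  field_simp
  ring
end

section
/- For γ = (p+2)/(2(p−2)) with 2 < p < 6, and V_*(s) = A^{p−2}/cosh²(Bs) with A^{p−2} = pΛ/2, B = (p−2)√Λ/2 (Λ > 0), one has c_LT(γ) ∫_ℝ V_*^{γ+1/2} ds = Λ^γ, where c_LT(γ) = ((2γ−1)/(2γ+1))^{γ−1/2} · (2γ/(2γ+1)) · Γ(γ)/(√π Γ(γ+1/2)). -/
/-!
Substituting `x = tanh u` turns `∫ (1 / cosh² u)^ν du` into `∫_{-1}^{1} (1 - x²)^(ν-1) dx`, which the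
affine change `x = 2t - 1` reduces to `4^(ν-1) B(ν, ν)`; Legendre's duplication formula evaluates this
as `√π Γ(ν) / Γ(ν + 1/2)`. For `ν = γ + 1/2` the Gamma factors cancel those in `c_LT(γ)`, and what
remains reduces to `(2γ + 1)(p - 2) = 2p`.
-/

open Real MeasureTheory Set

theorem Real.hasDerivAt_tanh (x : ℝ) : HasDerivAt tanh (1 / cosh x ^ 2) x := by
  have h := (hasDerivAt_sinh x).div (hasDerivAt_cosh x) (cosh_pos x).ne'
  rw [show sinh / cosh = tanh from funext fun y => (tanh_eq_sinh_div_cosh y).symm] at h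
  refine h.congr_deriv ?_
  rw [← sq, ← sq, cosh_sq_sub_sinh_sq]

theorem Real.one_sub_tanh_sq (x : ℝ) : 1 - tanh x ^ 2 = 1 / cosh x ^ 2 := by
  rw [tanh_eq_sinh_div_cosh, div_pow, one_sub_div (pow_ne_zero 2 (cosh_pos x).ne'),
    cosh_sq_sub_sinh_sq]

theorem integral_one_div_cosh_sq_rpow_eq_integral_Ioo (ν : ℝ) :
    ∫ u, (1 / cosh u ^ 2) ^ ν = ∫ x in Ioo (-1) 1, (1 - x ^ 2) ^ (ν - 1) := by
  rw [← tanh_bijOn.image_eq, integral_image_eq_integral_abs_deriv_smul MeasurableSet.univ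
    (fun x _ => (hasDerivAt_tanh x).hasDerivWithinAt) tanh_injective.injOn, setIntegral_univ]
  congr 1 with u
  have hc : 0 < 1 / cosh u ^ 2 := by positivity
  rw [one_sub_tanh_sq, abs_of_pos hc, smul_eq_mul]
  nth_rw 1 [← add_sub_cancel (1 : ℝ) ν, rpow_add hc, rpow_one]

theorem integral_rpow_mul_one_sub_rpow {a b : ℝ} (ha : 0 < a) (hb : 0 < b) :
    ∫ x in (0 : ℝ)..1, x ^ (a - 1) * (1 - x) ^ (b - 1) = Gamma a * Gamma b / Gamma (a + b) := by
  have hbeta : Complex.betaIntegral a b =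
      ((∫ x in (0 : ℝ)..1, x ^ (a - 1) * (1 - x) ^ (b - 1) : ℝ) : ℂ) := by
    rw [Complex.betaIntegral, ← intervalIntegral.integral_ofReal]
    refine intervalIntegral.integral_congr fun x hx => ?_
    rw [uIcc_of_le zero_le_one] at hx
    push_cast [Complex.ofReal_cpow hx.1, Complex.ofReal_cpow (sub_nonneg.2 hx.2)]
    rfl
  calc _ = (Complex.betaIntegral a b).re := by rw [hbeta, Complex.ofReal_re]
    _ = _ := (ProbabilityTheory.beta_eq_betaIntegralReal a b ha hb).symm

theorem two_mul_four_rpow_mul_two_rpow (ν : ℝ) : 2 * (4 : ℝ) ^ (ν - 1) * 2 ^ (1 - 2 * ν) = 1 := by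
  rw [show (4 : ℝ) = 2 ^ (2 : ℝ) by norm_num, ← rpow_mul zero_le_two, mul_comm,
    ← mul_assoc, ← rpow_add_one two_ne_zero, ← rpow_add two_pos,
    show 1 - 2 * ν + 1 + 2 * (ν - 1) = 0 by ring, rpow_zero]

theorem integral_one_sub_sq_rpow {ν : ℝ} (hν : 0 < ν) :
    ∫ x in (-1 : ℝ)..1, (1 - x ^ 2) ^ (ν - 1) = √π * Gamma ν / Gamma (ν + 1 / 2) := by
  have hsub : ∫ t in (0 : ℝ)..1, (1 - (2 * t - 1) ^ 2) ^ (ν - 1) =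
      1 / 2 * ∫ x in (-1 : ℝ)..1, (1 - x ^ 2) ^ (ν - 1) := by
    have := intervalIntegral.integral_comp_mul_sub (fun x : ℝ => (1 - x ^ 2) ^ (ν - 1))
      (a := 0) (b := 1) two_ne_zero 1
    norm_num at this
    exact this
  have hscale : ∀ t ∈ uIcc (0 : ℝ) 1,
      (1 - (2 * t - 1) ^ 2) ^ (ν - 1) = (4 : ℝ) ^ (ν - 1) * (t ^ (ν - 1) * (1 - t) ^ (ν - 1)) := by
    intro t ht
    rw [uIcc_of_le zero_le_one] at ht
    rw [← mul_rpow ht.1 (sub_nonneg.2 ht.2), ← mul_rpow (by norm_num) (mul_nonneg ht.1 (sub_nonneg.2 ht.2))]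
    ring_nf
  have hdup := Gamma_mul_Gamma_add_half ν
  have hΓ := (Gamma_pos_of_pos (by linarith : 0 < ν + 1 / 2)).ne'
  have hΓ2 := (Gamma_pos_of_pos (by linarith : 0 < 2 * ν)).ne'
  calc ∫ x in (-1 : ℝ)..1, (1 - x ^ 2) ^ (ν - 1)
      = 2 * ∫ t in (0 : ℝ)..1, (1 - (2 * t - 1) ^ 2) ^ (ν - 1) := by rw [hsub]; ring
    _ = 2 * ((4 : ℝ) ^ (ν - 1) * (Gamma ν * Gamma ν / Gamma (2 * ν))) := by
      rw [intervalIntegral.integral_congr hscale, intervalIntegral.integral_const_mul,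
        integral_rpow_mul_one_sub_rpow hν hν, ← two_mul]
    _ = √π * Gamma ν / Gamma (ν + 1 / 2) := by
      rw [eq_div_iff hΓ]
      calc 2 * ((4 : ℝ) ^ (ν - 1) * (Gamma ν * Gamma ν / Gamma (2 * ν))) * Gamma (ν + 1 / 2)
          = 2 * 4 ^ (ν - 1) * Gamma ν * (Gamma ν * Gamma (ν + 1 / 2)) / Gamma (2 * ν) := by ring
        _ = √π * Gamma ν := by
          rw [hdup, div_eq_iff hΓ2]
          linear_combination (√π * Gamma ν * Gamma (2 * ν)) * two_mul_four_rpow_mul_two_rpow ν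

theorem integral_one_div_cosh_sq_rpow {ν : ℝ} (hν : 0 < ν) :
    ∫ u, (1 / cosh u ^ 2) ^ ν = √π * Gamma ν / Gamma (ν + 1 / 2) := by
  rw [integral_one_div_cosh_sq_rpow_eq_integral_Ioo, ← integral_Ioc_eq_integral_Ioo,
    ← intervalIntegral.integral_of_le (by norm_num), integral_one_sub_sq_rpow hν]

theorem integral_div_cosh_mul_sq_rpow {a ν : ℝ} (b : ℝ) (ha : 0 ≤ a) (hν : 0 < ν) :
    ∫ s, (a / cosh (b * s) ^ 2) ^ ν = |b|⁻¹ * (a ^ ν * (√π * Gamma ν / Gamma (ν + 1 / 2))) := by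
  have hsplit : ∀ s, (a / cosh (b * s) ^ 2) ^ ν = a ^ ν * (1 / cosh (b * s) ^ 2) ^ ν := fun s => by
    rw [← mul_rpow ha (by positivity), mul_one_div]
  simp_rw [hsplit]
  rw [integral_const_mul, Measure.integral_comp_mul_left (fun u => (1 / cosh u ^ 2) ^ ν),
    integral_one_div_cosh_sq_rpow hν, smul_eq_mul, abs_inv]
  ring

theorem inv_rpow_mul_mul_rpow_add_one {x y : ℝ} (hx : 0 < x) (hy : 0 ≤ y) (a : ℝ) :
    x⁻¹ ^ a * (x * y) ^ (a + 1) = x * y ^ (a + 1) := by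
  rw [mul_rpow hx.le hy, inv_rpow hx.le, rpow_add_one hx.ne', ← mul_assoc, ← mul_assoc,
    inv_mul_cancel₀ (rpow_pos_of_pos hx a).ne', one_mul]

theorem two_gamma_ratio_rpow_mul_rpow_div_eq {p Λ γ : ℝ} (hp : 2 < p) (hΛ : 0 < Λ)
    (hγ : γ = (p + 2) / (2 * (p - 2))) :
    ((2 * γ - 1) / (2 * γ + 1)) ^ (γ - 1 / 2) * (2 * γ / (2 * γ + 1)) *
      (p * Λ / 2) ^ (γ + 1 / 2) / (γ * ((p - 2) * √Λ / 2)) = Λ ^ γ := by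
  have hp2 : p - 2 ≠ 0 := by linarith
  have hγ0 : 0 < γ := by rw [hγ]; exact div_pos (by linarith) (by linarith)
  have h2γ : 2 * γ + 1 ≠ 0 := by linarith
  have hratio : (2 * γ - 1) / (2 * γ + 1) = (p / 2)⁻¹ := by
    rw [hγ]; field_simp; rw [div_eq_iff (by linarith)]; ring
  have hγp : (2 * γ + 1) * (p - 2) = 2 * p := by rw [hγ]; field_simp; ring
  have hpow : ((2 * γ - 1) / (2 * γ + 1)) ^ (γ - 1 / 2) * (p * Λ / 2) ^ (γ + 1 / 2) =
      p / 2 * (Λ ^ γ * √Λ) := by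
    rw [hratio, show γ + 1 / 2 = γ - 1 / 2 + 1 by ring, show p * Λ / 2 = p / 2 * Λ by ring,
      inv_rpow_mul_mul_rpow_add_one (by positivity) hΛ.le, sqrt_eq_rpow, ← rpow_add hΛ]
    ring_nf
  rw [mul_right_comm, hpow]
  field_simp
  linear_combination -hγp

theorem stmt10_general (p Λ γ : ℝ) (hp : 2 < p) (hΛ : 0 < Λ)
    (hγ : γ = (p + 2) / (2 * (p - 2)))
    (B : ℝ) (hB : B = (p - 2) * Real.sqrt Λ / 2)
    (V : ℝ → ℝ) (hV : ∀ s : ℝ, V s = (p * Λ / 2) / Real.cosh (B * s) ^ 2)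
    (cLT : ℝ)
    (hcLT : cLT = ((2 * γ - 1) / (2 * γ + 1)) ^ (γ - 1 / 2) * (2 * γ / (2 * γ + 1)) *
      Real.Gamma γ / (Real.sqrt π * Real.Gamma (γ + 1 / 2))) :
    cLT * ∫ s : ℝ, V s ^ (γ + 1 / 2) = Λ ^ γ := by
  have hγ0 : 0 < γ := by rw [hγ]; exact div_pos (by linarith) (by linarith)
  have hB0 : 0 < B := hB ▸ half_pos (mul_pos (by linarith) (sqrt_pos.2 hΛ))
  have hintegral : ∫ s, V s ^ (γ + 1 / 2) =
      B⁻¹ * ((p * Λ / 2) ^ (γ + 1 / 2) * (√π * Gamma (γ + 1 / 2) / (γ * Gamma γ))) := by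
    simp_rw [hV]
    rw [integral_div_cosh_mul_sq_rpow B (by positivity) (by linarith), abs_of_pos hB0, add_assoc,
      add_halves, Gamma_add_one hγ0.ne']
  rw [hintegral, hcLT, ← two_gamma_ratio_rpow_mul_rpow_div_eq hp hΛ hγ, ← hB]
  field_simp

/-- With `γ = (p+2)/(2(p−2))`, `2 < p < 6`, `Λ > 0` and
`V⋆(s) = (pΛ/2)/cosh²((p−2)√Λ s/2)`, one has `c_LT(γ) ∫ V⋆^{γ+1/2} ds = Λ^γ`, where
`c_LT(γ) = ((2γ−1)/(2γ+1))^{γ−1/2} (2γ/(2γ+1)) Γ(γ)/(√π Γ(γ+1/2))`. -/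
theorem stmt10 (p Λ γ : ℝ) (hp : 2 < p) (hp6 : p < 6) (hΛ : 0 < Λ)
    (hγ : γ = (p + 2) / (2 * (p - 2)))
    (B : ℝ) (hB : B = (p - 2) * Real.sqrt Λ / 2)
    (V : ℝ → ℝ) (hV : ∀ s : ℝ, V s = (p * Λ / 2) / Real.cosh (B * s) ^ 2)
    (cLT : ℝ)
    (hcLT : cLT = ((2 * γ - 1) / (2 * γ + 1)) ^ (γ - 1 / 2) * (2 * γ / (2 * γ + 1)) *
      Real.Gamma γ / (Real.sqrt π * Real.Gamma (γ + 1 / 2))) :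
    cLT * ∫ s : ℝ, V s ^ (γ + 1 / 2) = Λ ^ γ :=
  stmt10_general p Λ γ hp hΛ hγ B hB V hV cLT hcLT
end

section
/- For 2 < p < 6 and θ ∈ (1/2, 1], the constant 𝔠(p,θ) defined as in the paper satisfies 𝔠(p,θ) ≥ 1 with equality if and only if θ = 1. -/
/-!
Write `S = (2θ - 1)p + 2`, `a = 2 - p(1 - θ)`, `b = p/(p - 2)`, `c = θp/(p - 2)` and
`φ(x) = x log x`. Taking logarithms, `S log 𝔠(p,θ)` is an elementary expression plus
`2(p - 2)(Λ(b) - Λ(c))` with `Λ(x) = 2 log Γ(x) - log Γ(2x)`, and `b = c` when `θ = 1`.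

Comparing Euler's product for `Γ` factor by factor, using the convexity of `φ` and the concavity
of `y ↦ φ(y + ½) - φ(y - ½) - log y`, shows that `Λ(x) - 2φ(x - ½) + φ(2x - ½)` is nondecreasing
on `(½, ∞)`. Replacing `Λ` accordingly bounds `S log 𝔠(p,θ)` below by an elementary function
`G(θ)` with `G(1) = 0` and `G'(θ) = 2p log((a/2)(2c - ½)² / (S (c - ½)²)) < 0`, the sign coming
from `S (c - ½)² - (a/2)(2c - ½)² = (3S + p - 2)/16`.
-/

open Real Filter Topology Set
open scoped Nat

noncomputable def doublingDefect (f : ℝ → ℝ) (u x : ℝ) : ℝ :=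
  2 * f (x + u) - f (2 * x + u)

/-- Compare the secant slopes of `f` over `[c + u, b + u]` and `[2c + u, 2b + u]`. -/
theorem ConvexOn.doublingDefect_le {s : Set ℝ} {f : ℝ → ℝ} (hf : ConvexOn ℝ s f)
    {u b c : ℝ} (hc : 0 ≤ c) (hcb : c ≤ b) (hcs : c + u ∈ s) (hbs : 2 * b + u ∈ s) :
    doublingDefect f u b ≤ doublingDefect f u c := by
  rcases hcb.eq_or_lt with rfl | hcb
  · rfl
  have mem : ∀ x, c + u ≤ x → x ≤ 2 * b + u → x ∈ s := fun x h₁ h₂ =>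
    hf.1.ordConnected.out hcs hbs ⟨h₁, h₂⟩
  have hbs' := mem (b + u) (by linarith) (by linarith)
  have hcs' := mem (2 * c + u) (by linarith) (by linarith)
  have h₁ := hf.secant_mono hcs hbs' hbs (by linarith) (by linarith) (by linarith)
  have h₂ := hf.secant_mono hbs hcs hcs' (by linarith) (by linarith) (by linarith)
  rw [div_le_div_iff₀ (by linarith) (by linarith)] at h₁
  simp only [← neg_div_neg_eq (f _ - f (2 * b + u)), neg_sub] at h₂
  rw [div_le_div_iff₀ (by linarith) (by linarith)] at h₂
  unfold doublingDefect
  nlinarith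

theorem ConcaveOn.doublingDefect_le {s : Set ℝ} {f : ℝ → ℝ} (hf : ConcaveOn ℝ s f)
    {u b c : ℝ} (hc : 0 ≤ c) (hcb : c ≤ b) (hcs : c + u ∈ s) (hbs : 2 * b + u ∈ s) :
    doublingDefect f u c ≤ doublingDefect f u b := by
  have := hf.neg.doublingDefect_le hc hcb hcs hbs
  simp only [doublingDefect, Pi.neg_apply] at this ⊢
  linarith

theorem HasDerivAt.mul_log {f : ℝ → ℝ} {f' x : ℝ} (hf : HasDerivAt f f' x) (hx : f x ≠ 0) :
    HasDerivAt (fun y => f y * Real.log (f y)) ((Real.log (f x) + 1) * f') x :=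
  (hasDerivAt_mul_log hx).comp x hf

theorem concaveOn_mul_log_centralDiff_sub_log :
    ConcaveOn ℝ (Ioi (1 / 2))
      (fun y => (y + 1 / 2) * log (y + 1 / 2) - (y - 1 / 2) * log (y - 1 / 2) - log y) := by
  have hf' : ∀ y ∈ Ioi (1 / 2 : ℝ), HasDerivAt
      (fun y => (y + 1 / 2) * log (y + 1 / 2) - (y - 1 / 2) * log (y - 1 / 2) - log y)
      (log (y + 1 / 2) - log (y - 1 / 2) - y⁻¹) y := by
    intro y (hy : 1 / 2 < y)
    refine ((((hasDerivAt_id' y).add_const (1 / 2)).mul_log (by linarith)).sub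
      (((hasDerivAt_id' y).sub_const (1 / 2)).mul_log (by linarith)) |>.sub
      (hasDerivAt_log (by linarith))).congr_deriv (by ring)
  have hf'' : ∀ y ∈ Ioi (1 / 2 : ℝ), HasDerivAt
      (fun y => log (y + 1 / 2) - log (y - 1 / 2) - y⁻¹)
      ((y + 1 / 2)⁻¹ - (y - 1 / 2)⁻¹ + (y ^ 2)⁻¹) y := by
    intro y (hy : 1 / 2 < y)
    refine ((((hasDerivAt_id' y).add_const (1 / 2)).log (by linarith)).sub
      (((hasDerivAt_id' y).sub_const (1 / 2)).log (by linarith))).sub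
      (hasDerivAt_inv (by linarith)) |>.congr_deriv (by ring)
  refine concaveOn_of_hasDerivWithinAt2_nonpos (convex_Ioi _)
    (fun y hy => (hf' y hy).continuousAt.continuousWithinAt)
    (fun y hy => (hf' y (by simpa using hy)).hasDerivWithinAt)
    (fun y hy => (hf'' y (by simpa using hy)).hasDerivWithinAt) ?_
  intro y hy
  have hy : 1 / 2 < y := by simpa using hy
  rw [inv_eq_one_div, inv_eq_one_div, inv_eq_one_div, sub_add_eq_add_sub, sub_nonpos,
    div_add_div _ _ (by linarith) (by positivity), div_le_div_iff₀ (by positivity) (by linarith)]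
  nlinarith

theorem doublingDefect_log_sub_le {b c u : ℝ} (hc : 1 / 2 < c) (hcb : c ≤ b) (hu : 0 ≤ u) :
    doublingDefect log u b - doublingDefect log u c ≤
      (doublingDefect (fun x => x * log x) (u + 1 / 2) b -
          doublingDefect (fun x => x * log x) (u + 1 / 2) c) -
        (doublingDefect (fun x => x * log x) (u - 1 / 2) b -
          doublingDefect (fun x => x * log x) (u - 1 / 2) c) := by
  have := concaveOn_mul_log_centralDiff_sub_log.doublingDefect_le (u := u) (by linarith) hcb
    (show 1 / 2 < c + u by linarith) (show 1 / 2 < 2 * b + u by linarith)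
  simp only [doublingDefect] at this ⊢
  ring_nf at this ⊢
  linarith

theorem sum_doublingDefect_log_sub_le {b c : ℝ} (hc : 1 / 2 < c) (hcb : c ≤ b) (n : ℕ) :
    ∑ j ∈ Finset.range (n + 1), (doublingDefect log j b - doublingDefect log j c) ≤
      (doublingDefect (fun x => x * log x) (n + 1 / 2) b -
          doublingDefect (fun x => x * log x) (n + 1 / 2) c) -
        (doublingDefect (fun x => x * log x) (-1 / 2) b -
          doublingDefect (fun x => x * log x) (-1 / 2) c) := by
  set Δ : ℝ → ℝ := fun v =>
    doublingDefect (fun x => x * log x) v b - doublingDefect (fun x => x * log x) v c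
  calc ∑ j ∈ Finset.range (n + 1), (doublingDefect log j b - doublingDefect log j c)
      ≤ ∑ j ∈ Finset.range (n + 1), (Δ ((j + 1 : ℕ) - 1 / 2) - Δ (j - 1 / 2)) := by
        refine Finset.sum_le_sum fun j _ => ?_
        rw [show ((j + 1 : ℕ) : ℝ) - 1 / 2 = j + 1 / 2 by push_cast; ring]
        exact doublingDefect_log_sub_le hc hcb j.cast_nonneg
    _ = Δ (n + 1 / 2) - Δ (-1 / 2) := by
        rw [Finset.sum_range_sub (fun i : ℕ => Δ (i - 1 / 2))]
        norm_num [add_sub_assoc]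

theorem log_GammaSeq {s : ℝ} (hs : 0 < s) {n : ℕ} (hn : n ≠ 0) :
    log (GammaSeq s n) = s * log n + log n ! - ∑ j ∈ Finset.range (n + 1), log (s + j) := by
  have hprod : ∀ j ∈ Finset.range (n + 1), s + (j : ℝ) ≠ 0 := fun j _ => by positivity
  rw [GammaSeq, log_div (by positivity) (Finset.prod_ne_zero_iff.2 hprod),
    log_mul (by positivity) (by positivity), log_rpow (by positivity), log_prod hprod]

theorem two_mul_log_GammaSeq_sub {s : ℝ} (hs : 0 < s) {n : ℕ} (hn : n ≠ 0) :
    2 * log (GammaSeq s n) - log (GammaSeq (2 * s) n) =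
      log n ! - ∑ j ∈ Finset.range (n + 1), doublingDefect log j s := by
  rw [log_GammaSeq hs hn, log_GammaSeq (by positivity) hn]
  simp only [doublingDefect, Finset.sum_sub_distrib, ← Finset.mul_sum]
  ring

theorem monotoneOn_log_Gamma_doubling_sub_mul_log :
    MonotoneOn (fun x => 2 * log (Gamma x) - log (Gamma (2 * x)) -
      doublingDefect (fun x => x * log x) (-1 / 2) x) (Ioi (1 / 2)) := by
  intro c (hc : 1 / 2 < c) b (hb : 1 / 2 < b) hcb
  have hlim : ∀ s : ℝ, 0 < s →
      Tendsto (fun n => 2 * log (GammaSeq s n) - log (GammaSeq (2 * s) n)) atTop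
        (𝓝 (2 * log (Gamma s) - log (Gamma (2 * s)))) := fun s hs =>
    (((GammaSeq_tendsto_Gamma s).log (Gamma_pos_of_pos hs).ne').const_mul 2).sub
      ((GammaSeq_tendsto_Gamma (2 * s)).log (Gamma_pos_of_pos (by positivity)).ne')
  have hsum : ∀ n : ℕ, n ≠ 0 →
      (2 * log (GammaSeq b n) - log (GammaSeq (2 * b) n)) -
        (2 * log (GammaSeq c n) - log (GammaSeq (2 * c) n)) =
      -∑ j ∈ Finset.range (n + 1), (doublingDefect log j b - doublingDefect log j c) := by
    intro n hn
    rw [two_mul_log_GammaSeq_sub (by linarith) hn, two_mul_log_GammaSeq_sub (by linarith) hn,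
      Finset.sum_sub_distrib]
    ring
  have hΓ : doublingDefect (fun x => x * log x) (-1 / 2) b -
      doublingDefect (fun x => x * log x) (-1 / 2) c ≤
      (2 * log (Gamma b) - log (Gamma (2 * b))) - (2 * log (Gamma c) - log (Gamma (2 * c))) := by
    refine ge_of_tendsto ((hlim b (by linarith)).sub (hlim c (by linarith))) ?_
    filter_upwards [eventually_ne_atTop 0] with n hn
    have htail := convexOn_mul_log.doublingDefect_le (u := n + 1 / 2) (by linarith) hcb
      (show 0 ≤ c + (n + 1 / 2) by positivity) (show 0 ≤ 2 * b + (n + 1 / 2) by positivity)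
    rw [hsum n hn]
    linarith [sum_doublingDefect_log_sub_le hc hcb n]
  simp only
  linarith

theorem HasDerivAt.doublingDefect {f : ℝ → ℝ} {f₁ f₂ u x : ℝ} (h₁ : HasDerivAt f f₁ (x + u))
    (h₂ : HasDerivAt f f₂ (2 * x + u)) :
    HasDerivAt (_root_.doublingDefect f u) (2 * f₁ - 2 * f₂) x := by
  have i₁ : HasDerivAt (fun x => x + u) 1 x := (hasDerivAt_id' x).add_const u
  have i₂ : HasDerivAt (fun x => 2 * x + u) 2 x := by
    simpa using ((hasDerivAt_id' x).const_mul 2).add_const u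
  exact (((h₁.comp x i₁).const_mul 2).sub (h₂.comp x i₂)).congr_deriv (by ring)

theorem half_lt_mul_div_sub_two {p t : ℝ} (hp : 2 < p) (ht : 0 < 2 - p * (1 - t)) :
    1 / 2 < t * p / (p - 2) := by
  rw [lt_div_iff₀ (by linarith)]
  linarith

noncomputable def constC (p θ : ℝ) : ℝ :=
  (p + 2) ^ ((p + 2) / ((2 * θ - 1) * p + 2)) / ((2 * θ - 1) * p + 2) *
      ((2 - p * (1 - θ)) / 2) ^ (2 * (2 - p * (1 - θ)) / ((2 * θ - 1) * p + 2)) *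
      (Real.Gamma (p / (p - 2)) / Real.Gamma (θ * p / (p - 2))) ^
        (4 * (p - 2) / ((2 * θ - 1) * p + 2)) *
      (Real.Gamma (2 * θ * p / (p - 2)) / Real.Gamma (2 * p / (p - 2))) ^
        (2 * (p - 2) / ((2 * θ - 1) * p + 2))

theorem constC_one {p : ℝ} (hp : 2 < p) : constC p 1 = 1 := by
  have hb : 0 < p / (p - 2) := div_pos (by linarith) (by linarith)
  have h2b : 0 < 2 * p / (p - 2) := div_pos (by linarith) (by linarith)
  norm_num [constC, div_self (show p + 2 ≠ 0 by linarith), div_self (Gamma_pos_of_pos hb).ne',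
    div_self (Gamma_pos_of_pos h2b).ne']

theorem mul_log_constC {p θ : ℝ} (hp : 2 < p) (hpθ : 0 < 2 - p * (1 - θ)) :
    ((2 * θ - 1) * p + 2) * log (constC p θ) =
      (p + 2) * log (p + 2) - ((2 * θ - 1) * p + 2) * log ((2 * θ - 1) * p + 2)
        + 2 * (2 - p * (1 - θ)) * log ((2 - p * (1 - θ)) / 2)
        + 2 * (p - 2) * ((2 * log (Gamma (p / (p - 2))) - log (Gamma (2 * (p / (p - 2)))))
          - (2 * log (Gamma (θ * p / (p - 2))) - log (Gamma (2 * (θ * p / (p - 2)))))) := by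
  have hS : 0 < (2 * θ - 1) * p + 2 := by nlinarith
  have hc := half_lt_mul_div_sub_two hp hpθ
  have hb : 1 / 2 < p / (p - 2) := by simpa using half_lt_mul_div_sub_two (t := 1) hp (by simp)
  have hΓb := Gamma_pos_of_pos (show 0 < p / (p - 2) by linarith)
  have hΓc := Gamma_pos_of_pos (show 0 < θ * p / (p - 2) by linarith)
  have hΓ2b := Gamma_pos_of_pos (show 0 < 2 * (p / (p - 2)) by linarith)
  have hΓ2c := Gamma_pos_of_pos (show 0 < 2 * (θ * p / (p - 2)) by linarith)
  rw [constC, show 2 * θ * p / (p - 2) = 2 * (θ * p / (p - 2)) by ring,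
    show 2 * p / (p - 2) = 2 * (p / (p - 2)) by ring,
    log_mul (by positivity) (by positivity), log_mul (by positivity) (by positivity),
    log_mul (by positivity) (by positivity), log_div (by positivity) hS.ne',
    log_rpow (by linarith), log_rpow (by linarith), log_rpow (by positivity),
    log_rpow (by positivity), log_div hΓb.ne' hΓc.ne', log_div hΓ2c.ne' hΓ2b.ne']
  field_simp
  ring

noncomputable def constCLowerBound (p t : ℝ) : ℝ :=
  (p + 2) * log (p + 2) - ((2 * t - 1) * p + 2) * log ((2 * t - 1) * p + 2)
    + 2 * (2 - p * (1 - t)) * log ((2 - p * (1 - t)) / 2)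
    + 2 * (p - 2) * (doublingDefect (fun x => x * log x) (-1 / 2) (p / (p - 2))
      - doublingDefect (fun x => x * log x) (-1 / 2) (t * p / (p - 2)))

theorem constCLowerBound_le_mul_log_constC {p θ : ℝ} (hp : 2 < p) (hθ : θ ≤ 1)
    (hpθ : 0 < 2 - p * (1 - θ)) :
    constCLowerBound p θ ≤ ((2 * θ - 1) * p + 2) * log (constC p θ) := by
  have hc := half_lt_mul_div_sub_two hp hpθ
  have hcb : θ * p / (p - 2) ≤ p / (p - 2) := by
    gcongr
    nlinarith
  have hmono := monotoneOn_log_Gamma_doubling_sub_mul_log hc (hc.trans_le hcb) hcb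
  simp only at hmono
  rw [mul_log_constC hp hpθ, constCLowerBound]
  have hp2 : 0 ≤ 2 * (p - 2) := by linarith
  linarith [mul_le_mul_of_nonneg_left hmono hp2]

theorem hasDerivAt_constCLowerBound {p t : ℝ} (hp : 2 < p) (ht : 0 < 2 - p * (1 - t)) :
    HasDerivAt (constCLowerBound p)
      (2 * p * (log ((2 - p * (1 - t)) / 2) + 2 * log (2 * (t * p / (p - 2)) + -1 / 2)
        - log ((2 * t - 1) * p + 2) - 2 * log (t * p / (p - 2) + -1 / 2))) t := by
  have hS : 0 < (2 * t - 1) * p + 2 := by nlinarith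
  have hc : 0 < t * p / (p - 2) + -1 / 2 := by linarith [half_lt_mul_div_sub_two hp ht]
  have dS : HasDerivAt (fun t => (2 * t - 1) * p + 2) (2 * p) t := by
    simpa using ((((hasDerivAt_id' t).const_mul 2).sub_const 1).mul_const p).add_const 2
  have da : HasDerivAt (fun t => 2 - p * (1 - t)) p t := by
    simpa using (((hasDerivAt_id' t).const_sub 1).const_mul p).const_sub 2
  have dc : HasDerivAt (fun t => t * p / (p - 2)) (p / (p - 2)) t := by
    simpa using ((hasDerivAt_id' t).mul_const p).div_const (p - 2)
  have dD := (HasDerivAt.doublingDefect (hasDerivAt_mul_log hc.ne')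
    (hasDerivAt_mul_log (by linarith))).comp t dc
  have := (((hasDerivAt_const t ((p + 2) * log (p + 2))).sub (dS.mul_log hS.ne')).add
    ((da.const_mul 2).mul ((da.div_const 2).log (by positivity)))).add
    ((hasDerivAt_const t (doublingDefect (fun x => x * log x) (-1 / 2) (p / (p - 2)))).sub dD
      |>.const_mul (2 * (p - 2)))
  refine this.congr_deriv ?_
  have : p - 2 ≠ 0 := by linarith
  field_simp
  ring

theorem deriv_constCLowerBound_neg {p t : ℝ} (hp : 2 < p) (ht : 0 < 2 - p * (1 - t)) :
    2 * p * (log ((2 - p * (1 - t)) / 2) + 2 * log (2 * (t * p / (p - 2)) + -1 / 2)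
      - log ((2 * t - 1) * p + 2) - 2 * log (t * p / (p - 2) + -1 / 2)) < 0 := by
  have hS : 0 < (2 * t - 1) * p + 2 := by nlinarith
  have hc : 0 < t * p / (p - 2) + -1 / 2 := by linarith [half_lt_mul_div_sub_two hp ht]
  have hc₂ : 0 < 2 * (t * p / (p - 2)) + -1 / 2 := by linarith
  have hgap : ((2 * t - 1) * p + 2) * (t * p / (p - 2) + -1 / 2) ^ 2 -
      (2 - p * (1 - t)) / 2 * (2 * (t * p / (p - 2)) + -1 / 2) ^ 2 =
      (3 * ((2 * t - 1) * p + 2) + p - 2) / 16 := by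
    have : p - 2 ≠ 0 := by linarith
    field_simp
    ring
  have hlt := log_lt_log (by positivity) (show (2 - p * (1 - t)) / 2 *
      (2 * (t * p / (p - 2)) + -1 / 2) ^ 2 <
      ((2 * t - 1) * p + 2) * (t * p / (p - 2) + -1 / 2) ^ 2 by linarith)
  rw [log_mul (by positivity) (by positivity), log_mul hS.ne' (by positivity), log_pow,
    log_pow] at hlt
  push_cast at hlt
  exact mul_neg_of_pos_of_neg (by linarith) (by linarith)

theorem constCLowerBound_pos {p θ : ℝ} (hp : 2 < p) (hpθ : 0 < 2 - p * (1 - θ)) (hθ : θ < 1) :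
    0 < constCLowerBound p θ := by
  have ha : ∀ t ∈ Icc θ 1, 0 < 2 - p * (1 - t) := fun t ht => by nlinarith [ht.1]
  have hanti : StrictAntiOn (constCLowerBound p) (Icc θ 1) :=
    strictAntiOn_of_hasDerivWithinAt_neg (convex_Icc θ 1)
      (fun t ht => (hasDerivAt_constCLowerBound hp (ha t ht)).continuousAt.continuousWithinAt)
      (fun t ht => (hasDerivAt_constCLowerBound hp
        (ha t (interior_subset ht))).hasDerivWithinAt)
      (fun t ht => deriv_constCLowerBound_neg hp (ha t (interior_subset ht)))
  have h₁ : constCLowerBound p 1 = 0 := by norm_num [constCLowerBound]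
  simpa [h₁] using hanti (left_mem_Icc.2 hθ.le) (right_mem_Icc.2 hθ.le) hθ

theorem one_lt_constC {p θ : ℝ} (hp : 2 < p) (hpθ : 0 < 2 - p * (1 - θ)) (hθ : θ < 1) :
    1 < constC p θ := by
  have hS : 0 < (2 * θ - 1) * p + 2 := by nlinarith
  have hpos := (constCLowerBound_pos hp hpθ hθ).trans_le
    (constCLowerBound_le_mul_log_constC hp hθ.le hpθ)
  have hΓ : ∀ x : ℝ, 0 < x → 0 ≤ Gamma x := fun x hx => (Gamma_pos_of_pos hx).le
  have hC : 0 ≤ constC p θ := by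
    refine mul_nonneg (mul_nonneg (mul_nonneg (div_nonneg (rpow_nonneg ?_ _) hS.le)
      (rpow_nonneg ?_ _)) (rpow_nonneg (div_nonneg (hΓ _ ?_) (hΓ _ ?_)) _))
      (rpow_nonneg (div_nonneg (hΓ _ ?_) (hΓ _ ?_)) _) <;>
    first | linarith | exact div_pos (by nlinarith) (by linarith)
  exact (log_pos_iff hC).1 (pos_of_mul_pos_right hpos hS.le)

theorem stmt19_general (p θ : ℝ) (hp : 2 < p)
    (hθ2 : θ ≤ 1) (hpθ : 0 < 2 - p * (1 - θ))
    (C : ℝ)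
    (hC : C = (p + 2) ^ ((p + 2) / ((2 * θ - 1) * p + 2)) / ((2 * θ - 1) * p + 2) *
      ((2 - p * (1 - θ)) / 2) ^ (2 * (2 - p * (1 - θ)) / ((2 * θ - 1) * p + 2)) *
      (Real.Gamma (p / (p - 2)) / Real.Gamma (θ * p / (p - 2))) ^
        (4 * (p - 2) / ((2 * θ - 1) * p + 2)) *
      (Real.Gamma (2 * θ * p / (p - 2)) / Real.Gamma (2 * p / (p - 2))) ^
        (2 * (p - 2) / ((2 * θ - 1) * p + 2))) :
    1 ≤ C ∧ (C = 1 ↔ θ = 1) := by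
  change C = constC p θ at hC
  subst hC
  rcases hθ2.lt_or_eq with hθ | rfl
  · have h := one_lt_constC hp hpθ hθ
    exact ⟨h.le, iff_of_false h.ne' hθ.ne⟩
  · simp [constC_one hp]

/-- For `2 < p < 6` and `θ ∈ (1/2, 1]` with `2 − p(1−θ) > 0`, the constant `𝔠(p,θ)` of the
paper satisfies `𝔠(p,θ) ≥ 1`, with equality if and only if `θ = 1`. -/
theorem stmt19 (p θ : ℝ) (hp : 2 < p) (hp6 : p < 6)
    (hθ1 : 1 / 2 < θ) (hθ2 : θ ≤ 1) (hpθ : 0 < 2 - p * (1 - θ))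
    (C : ℝ)
    (hC : C = (p + 2) ^ ((p + 2) / ((2 * θ - 1) * p + 2)) / ((2 * θ - 1) * p + 2) *
      ((2 - p * (1 - θ)) / 2) ^ (2 * (2 - p * (1 - θ)) / ((2 * θ - 1) * p + 2)) *
      (Real.Gamma (p / (p - 2)) / Real.Gamma (θ * p / (p - 2))) ^
        (4 * (p - 2) / ((2 * θ - 1) * p + 2)) *
      (Real.Gamma (2 * θ * p / (p - 2)) / Real.Gamma (2 * p / (p - 2))) ^
        (2 * (p - 2) / ((2 * θ - 1) * p + 2))) :
    1 ≤ C ∧ (C = 1 ↔ θ = 1) :=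
  stmt19_general p θ hp hθ2 hpθ C hC
end
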